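/- arXiv:1910.00821 — 3 statements merged into one kernel-verified Lean document; each statement's English description precedes it below -/
import Mathlib

section
/- Let Y be an m×d real matrix with column mean ȳ = Y·e/d (e the all-ones vector), and ε ≥ 0. Define Z(:,j) = Y(:,j) + dε(Y(:,j) − ȳ) for each j. Then the set of near-convex combinations of the columns of Y, i.e. {Ya : ∑ᵢ aᵢ = 1, aᵢ ≥ −ε for all i}, equals the set of convex combinations of the columns of Z, i.e. {Za : ∑ᵢ aᵢ = 1, aᵢ ≥ 0 for all i}. -/
theorem stmt0 (m d : ℕ) (Y : Matrix (Fin m) (Fin d) ℝ) (ε : ℝ) (hε : 0 ≤ ε)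
    (ybar : Fin m → ℝ) (hybar : ∀ i, ybar i = (∑ j, Y i j) / d)
    (Z : Matrix (Fin m) (Fin d) ℝ)
    (hZ : ∀ i j, Z i j = Y i j + d * ε * (Y i j - ybar i)) :
    {x : Fin m → ℝ | ∃ a : Fin d → ℝ, (∑ i, a i) = 1 ∧ (∀ i, -ε ≤ a i) ∧ x = Y.mulVec a}
      = {x : Fin m → ℝ | ∃ a : Fin d → ℝ, (∑ i, a i) = 1 ∧ (∀ i, 0 ≤ a i) ∧ x = Z.mulVec a} := by
  have hpos : (0:ℝ) < 1 + d * ε := by positivity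
  have hd : ∀ i, (d:ℝ) * ybar i = ∑ j, Y i j := by
    intro i
    rw [hybar]
    rcases Nat.eq_zero_or_pos d with h | h
    · subst h; simp
    · have : (d:ℝ) ≠ 0 := Nat.cast_ne_zero.mpr h.ne'
      field_simp
  have key : ∀ b : Fin d → ℝ, ∀ i, Z.mulVec b i
      = (1 + d*ε) * Y.mulVec b i - d * ε * ybar i * (∑ j, b j) := by
    intro b i
    simp only [Matrix.mulVec, dotProduct]
    rw [Finset.mul_sum, Finset.mul_sum, ← Finset.sum_sub_distrib]
    refine Finset.sum_congr rfl fun j _ => ?_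
    rw [hZ]; ring
  ext x
  simp only [Set.mem_setOf_eq]
  constructor
  · rintro ⟨a, hsum, hge, rfl⟩
    refine ⟨fun j => (a j + ε) / (1 + d*ε), ?_, ?_, ?_⟩
    · rw [← Finset.sum_div]
      rw [Finset.sum_add_distrib, hsum, Finset.sum_const, Finset.card_univ,
        Fintype.card_fin, nsmul_eq_mul]
      field_simp
    · intro j
      apply div_nonneg _ hpos.le
      linarith [hge j]
    · funext i
      rw [key]
      have hYb : Y.mulVec (fun j => (a j + ε) / (1 + d*ε)) i
          = (Y.mulVec a i + ε * (d * ybar i)) / (1 + d*ε) := by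
        simp only [Matrix.mulVec, dotProduct]
        rw [hd, eq_div_iff hpos.ne', Finset.sum_mul, Finset.mul_sum,
          ← Finset.sum_add_distrib]
        refine Finset.sum_congr rfl fun j _ => ?_
        field_simp
      rw [hYb]
      have hsb : (∑ j, (a j + ε) / (1 + d*ε)) = 1 := by
        rw [← Finset.sum_div, Finset.sum_add_distrib, hsum, Finset.sum_const,
          Finset.card_univ, Fintype.card_fin, nsmul_eq_mul]
        field_simp
      rw [hsb]
      field_simp
      ring
  · rintro ⟨b, hsum, hge, rfl⟩
    refine ⟨fun j => (1 + d*ε) * b j - ε, ?_, ?_, ?_⟩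
    · rw [Finset.sum_sub_distrib, ← Finset.mul_sum, hsum, Finset.sum_const,
        Finset.card_univ, Fintype.card_fin, nsmul_eq_mul]
      ring
    · intro j
      show -ε ≤ (1 + (d:ℝ)*ε) * b j - ε
      linarith [mul_nonneg hpos.le (hge j)]
    · funext i
      rw [key, hsum]
      simp only [Matrix.mulVec, dotProduct]
      have : ∀ j, Y i j * ((1 + d*ε) * b j - ε) = (1 + d*ε) * (Y i j * b j) - ε * Y i j := by
        intro j; ring
      simp_rw [this]
      rw [Finset.sum_sub_distrib, ← Finset.mul_sum, ← Finset.mul_sum, ← hd]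
      ring
end

section
/- Let Y ∈ ℝ^{m×d}, ε ≥ 0, x = Ya with ∑ᵢ aᵢ = 1 and aᵢ ≥ −ε, and let C = conv{Y(:,1),…,Y(:,d)}. Then x is within Euclidean distance dε·maxᵢ‖Y(:,i) − ȳ‖ of C. -/
theorem stmt7 (m d : ℕ) (hd : 0 < d) (Y : Matrix (Fin m) (Fin d) ℝ) (ε : ℝ) (hε : 0 ≤ ε)
    (ybar : Fin m → ℝ) (hybar : ∀ i, ybar i = (∑ j, Y i j) / d)
    (a : Fin d → ℝ) (ha1 : (∑ i, a i) = 1) (ha2 : ∀ i, -ε ≤ a i) :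
    Metric.infDist (show EuclideanSpace ℝ (Fin m) from WithLp.toLp 2 (Y.mulVec a))
      (convexHull ℝ (Set.range fun j => (show EuclideanSpace ℝ (Fin m) from WithLp.toLp 2 fun i => Y i j)))
      ≤ d * ε * (Finset.univ.sup' (Finset.univ_nonempty_iff.mpr (Fin.pos_iff_nonempty.mp hd))
          fun j => ‖(show EuclideanSpace ℝ (Fin m) from WithLp.toLp 2 fun i => Y i j - ybar i)‖) := by
  classical
  have hne : (Finset.univ : Finset (Fin d)).Nonempty :=
    Finset.univ_nonempty_iff.mpr (Fin.pos_iff_nonempty.mp hd)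
  have hd' : (d : ℝ) ≠ 0 := Nat.cast_ne_zero.mpr hd.ne'
  set S : ℝ := 1 + d * ε with hSdef
  have hS : 0 < S := by positivity
  set Z : Fin d → EuclideanSpace ℝ (Fin m) := fun j => WithLp.toLp 2 (fun i => Y i j) with hZ
  set x : EuclideanSpace ℝ (Fin m) := WithLp.toLp 2 (Y.mulVec a) with hx
  set yb : EuclideanSpace ℝ (Fin m) := WithLp.toLp 2 ybar with hyb
  have hyb' : ∀ i, ybar i = (∑ j, Y i j) / d := hybar
  set M : ℝ := Finset.univ.sup' hne fun j => ‖Z j - yb‖ with hMdef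
  have hw : ∀ j, (0:ℝ) ≤ a j + ε := fun j => by linarith [ha2 j]
  have hwsum : (∑ j, (a j + ε)) = S := by
    simp [Finset.sum_add_distrib, ha1, hSdef, mul_comm]
  have sum_apply : ∀ (f : Fin d → EuclideanSpace ℝ (Fin m)) (i : Fin m),
      (∑ j, f j) i = ∑ j, f j i := by
    intro f i
    exact map_sum (EuclideanSpace.proj i : EuclideanSpace ℝ (Fin m) →L[ℝ] ℝ) f Finset.univ
  set c : EuclideanSpace ℝ (Fin m) :=
    Finset.univ.centerMass (fun j => a j + ε) Z with hcdef
  have hc : c ∈ convexHull ℝ (Set.range Z) :=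
    Finset.centerMass_mem_convexHull _ (fun j _ => hw j)
      (by rw [hwsum]; exact hS) (fun j _ => Set.mem_range_self j)
  have hci : ∀ i, c i = S⁻¹ * ∑ j, (a j + ε) * Y i j := by
    intro i
    rw [hcdef, Finset.centerMass, hwsum]
    have h1 : ((S⁻¹ • ∑ j, (a j + ε) • Z j : EuclideanSpace ℝ (Fin m))) i
        = S⁻¹ * (∑ j, (a j + ε) • Z j : EuclideanSpace ℝ (Fin m)) i := rfl
    rw [h1, sum_apply]
    exact congrArg (S⁻¹ * ·) (Finset.sum_congr rfl fun j _ => rfl)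
  have hxi : ∀ i, x i = ∑ j, Y i j * a j := by
    intro i
    simp [hx, Matrix.mulVec, dotProduct]
  have hsum1 : ∀ i, (∑ j, (a j + ε) * Y i j) = x i + ε * (∑ j, Y i j) := by
    intro i
    rw [hxi i, Finset.mul_sum]
    rw [← Finset.sum_add_distrib]
    congr 1; funext j; ring
  have key1 : x - c = ((d * ε) / S) • (x - yb) := by
    ext i
    have h1 : (x - c) i = x i - c i := rfl
    have h2 : (((d * ε) / S) • (x - yb)) i = ((d * ε) / S) * (x i - ybar i) := rfl
    rw [h1, h2, hci i, hsum1 i, hyb' i]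
    field_simp
    ring
  have key2 : x - yb = ∑ j, (a j + ε) • (Z j - yb) := by
    ext i
    have h1 : (x - yb) i = x i - ybar i := rfl
    have h2 : (∑ j, (a j + ε) • (Z j - yb)) i = ∑ j, (a j + ε) * (Y i j - ybar i) := by
      rw [sum_apply]
      congr 1
    rw [h1, h2]
    have expand : (∑ j, (a j + ε) * (Y i j - ybar i))
        = ((∑ j, Y i j * a j) + ε * (∑ j, Y i j)) - (∑ j, (a j + ε)) * ybar i := by
      have e : ∀ j ∈ Finset.univ, (a j + ε) * (Y i j - ybar i)
          = (Y i j * a j + ε * Y i j) - (a j + ε) * ybar i := fun j _ => by ring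
      rw [Finset.sum_congr rfl e, Finset.sum_sub_distrib, Finset.sum_add_distrib,
        ← Finset.mul_sum, ← Finset.sum_mul]
    rw [expand, hwsum, hyb' i, hxi i]
    field_simp [hSdef]
    ring
  have hMle : ∀ j, ‖Z j - yb‖ ≤ M :=
    fun j => Finset.le_sup' (fun j => ‖Z j - yb‖) (Finset.mem_univ j)
  have hbound : ‖x - yb‖ ≤ S * M := by
    rw [key2]
    calc ‖∑ j, (a j + ε) • (Z j - yb)‖ ≤ ∑ j, ‖(a j + ε) • (Z j - yb)‖ :=
          norm_sum_le _ _
      _ = ∑ j, (a j + ε) * ‖Z j - yb‖ := by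
          congr 1; funext j; rw [norm_smul, Real.norm_eq_abs, abs_of_nonneg (hw j)]
      _ ≤ ∑ j, (a j + ε) * M :=
          Finset.sum_le_sum fun j _ => mul_le_mul_of_nonneg_left (hMle j) (hw j)
      _ = S * M := by rw [← Finset.sum_mul, hwsum]
  calc Metric.infDist x (convexHull ℝ (Set.range Z)) ≤ dist x c :=
        Metric.infDist_le_dist_of_mem hc
    _ = ‖x - c‖ := dist_eq_norm _ _
    _ = ((d * ε) / S) * ‖x - yb‖ := by
        rw [key1, norm_smul, Real.norm_eq_abs, abs_of_nonneg (by positivity)]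
    _ ≤ ((d * ε) / S) * (S * M) :=
        mul_le_mul_of_nonneg_left hbound (by positivity)
    _ = d * ε * M := by field_simp
end

section
/- Let Y ∈ ℝ^{m×d}, ε ≥ 0, and suppose every column of Y lies in the convex hull of the columns of X ∈ ℝ^{m×n}. Then every near-convex combination x = Ya (with ∑aᵢ = 1, aᵢ ≥ −ε) can be written as x = Xb with ∑ᵢ bᵢ = 1 and bᵢ ≥ −dε for all i; i.e., x is a near-convex combination of the columns of X with parameter dε. -/
theorem stmt12 (m n d : ℕ)
    (Y : Matrix (Fin m) (Fin d) ℝ) (X : Matrix (Fin m) (Fin n) ℝ) (ε : ℝ) (hε : 0 ≤ ε)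
    (hY : ∀ j, (fun i => Y i j) ∈ convexHull ℝ (Set.range fun l => (fun i => X i l)))
    (a : Fin d → ℝ) (ha1 : (∑ i, a i) = 1) (ha2 : ∀ i, -ε ≤ a i) :
    ∃ b : Fin n → ℝ, (∑ i, b i) = 1 ∧ (∀ i, -(d * ε) ≤ b i) ∧ Y.mulVec a = X.mulVec b := by
  have hc : ∀ j, ∃ c : Fin n → ℝ, (∀ l, 0 ≤ c l) ∧ (∑ l, c l) = 1 ∧
      ∀ i, Y i j = ∑ l, c l * X i l := by
    intro j
    have h := hY j
    rw [convexHull_range_eq_exists_affineCombination] at h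
    obtain ⟨s, w, hw0, hw1, hx⟩ := h
    refine ⟨fun l => if l ∈ s then w l else 0,
      fun l => by
        by_cases h : l ∈ s
        · simpa [h] using hw0 _ h
        · simp [h], ?_, ?_⟩
    · rw [Finset.sum_ite_mem, Finset.univ_inter, hw1]
    · intro i
      have : (fun i => Y i j) = ∑ l ∈ s, w l • (fun i => X i l) := by
        rw [← hx, affineCombination_eq_centerMass hw1,
          Finset.centerMass_eq_of_sum_1 _ _ hw1]
      have h2 := congrFun this i
      simp only [Finset.sum_apply, Pi.smul_apply, smul_eq_mul] at h2
      rw [h2]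
      symm
      simp only [ite_mul, zero_mul]
      rw [Finset.sum_ite_mem, Finset.univ_inter]
  choose c hc0 hc1 hcX using hc
  have hcle1 : ∀ j l, c j l ≤ 1 := fun j l =>
    (hc1 j) ▸ Finset.single_le_sum (fun t _ => hc0 j t) (Finset.mem_univ l)
  refine ⟨fun l => ∑ j, a j * c j l, ?_, ?_, ?_⟩
  · rw [Finset.sum_comm]
    simp_rw [← Finset.mul_sum, hc1, mul_one, ha1]
  · intro l
    calc -(d * ε) = ∑ _j : Fin d, -ε := by simp [mul_comm]
    _ ≤ ∑ j, a j * c j l := by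
        refine Finset.sum_le_sum fun j _ => ?_
        rcases le_or_gt 0 (a j) with h | h
        · nlinarith [hc0 j l]
        · nlinarith [hc0 j l, hcle1 j l, ha2 j]
  · funext i
    simp only [Matrix.mulVec, dotProduct]
    calc ∑ j, Y i j * a j = ∑ j, ∑ l, a j * (c j l * X i l) := by
          refine Finset.sum_congr rfl fun j _ => ?_
          rw [mul_comm, hcX j i, Finset.mul_sum]
      _ = ∑ l, X i l * ∑ j, a j * c j l := by
          rw [Finset.sum_comm]
          simp_rw [Finset.mul_sum]
          exact Finset.sum_congr rfl fun l _ =>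
            Finset.sum_congr rfl fun j _ => by ring
end
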